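/- arXiv:2311.06257 — 2 statements merged into one kernel-verified Lean document; each statement's English description precedes it below -/
import Mathlib

section
/- (Theorem 3.5(b), Euclidean case.) Let p̄ ∈ F and suppose ψ_u : E → ℝ (u = 1,…,t) are convex at p̄ and directionally differentiable at p̄. Suppose there exists an index c ∈ {1,…,l} such that the interval-valued objective φ_c is CW-convex at p̄ and weakly directionally differentiable at p̄, and there exist scalars λ^C > 0, λ^W > 0 and μ_u ≥ 0 (u = 1,…,t) such that: (iii) for all p ∈ E, λ^C (φ_c^C)'(p̄; p − p̄) + λ^W (φ_c^W)'(p̄; p − p̄) + Σ_{u=1}^t μ_u ψ_u'(p̄; p − p̄) ≥ 0; and (iv) μ_u ψ_u(p̄) = 0 for all u. Then p̄ is a weakly type-II Pareto optimal solution of (MIVOP2). -/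
/-- One-sided directional derivative of `f` at `p` in direction `w`, with value `d`. -/
def HasDirDeriv {V : Type*} [NormedAddCommGroup V] [NormedSpace ℝ V]
    (f : V → ℝ) (p w : V) (d : ℝ) : Prop :=
  Filter.Tendsto (fun α : ℝ => (f (p + α • w) - f p) / α)
    (nhdsWithin 0 (Set.Ioi 0)) (nhds d)

/-- `f` is convex at the point `p` (relative to the convex set `E`). -/
def ConvexAtPt {V : Type*} [NormedAddCommGroup V] [NormedSpace ℝ V]
    (E : Set V) (f : V → ℝ) (p : V) : Prop :=
  ∀ q ∈ E, ∀ α : ℝ, 0 ≤ α → α ≤ 1 →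
    f ((1 - α) • p + α • q) ≤ (1 - α) * f p + α * f q

/-- `f` (with directional-derivative function `f'` at `pbar`) is pseudo-convex at `pbar`. -/
def PseudoConvexAt {V : Type*} [NormedAddCommGroup V] [NormedSpace ℝ V]
    (E : Set V) (f : V → ℝ) (f' : V → ℝ) (pbar : V) : Prop :=
  ∀ p ∈ E, f p < f pbar → f' (p - pbar) < 0

/-- `f` (with directional-derivative function `f'` at `pbar`) is strictly
pseudo-convex at `pbar`. -/
def StrictPseudoConvexAt {V : Type*} [NormedAddCommGroup V] [NormedSpace ℝ V]
    (E : Set V) (f : V → ℝ) (f' : V → ℝ) (pbar : V) : Prop :=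
  ∀ p ∈ E, p ≠ pbar → f p ≤ f pbar → f' (p - pbar) < 0

/-- `[aL, aU] ≤_LU [bL, bU]`. -/
def LUle (aL aU bL bU : ℝ) : Prop := aL ≤ bL ∧ aU ≤ bU

/-- `[aL, aU] <_LU [bL, bU]`. -/
def LUlt (aL aU bL bU : ℝ) : Prop := LUle aL aU bL bU ∧ (aL ≠ bL ∨ aU ≠ bU)

/-- `[aL, aU] ≤_CW [bL, bU]`. -/
def CWle (aL aU bL bU : ℝ) : Prop :=
  (aL + aU) / 2 ≤ (bL + bU) / 2 ∧ (aU - aL) / 2 ≤ (bU - bL) / 2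

/-- `[aL, aU] <_CW [bL, bU]`. -/
def CWlt (aL aU bL bU : ℝ) : Prop := CWle aL aU bL bU ∧ (aL ≠ bL ∨ aU ≠ bU)


/-
Directional derivatives of a function convex at `pbar` underestimate its increments:
`f'(pbar; p - pbar) ≤ f p - f pbar`. Applied to the center and width of `φ_c` and to the
constraints, the KKT inequality at a point `phat` that CW-dominates `pbar` becomes
`0 ≤ λ^C Δcenter + λ^W Δwidth + ∑ μ_u (ψ_u phat - ψ_u pbar)`. Complementary slackness and
feasibility of `phat` make the sum nonpositive, while strict CW-dominance makes the first
two terms negative.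
-/

section DirDeriv

variable {V : Type*} [NormedAddCommGroup V] [NormedSpace ℝ V]

theorem HasDirDeriv.add {f g : V → ℝ} {p w : V} {a b : ℝ}
    (hf : HasDirDeriv f p w a) (hg : HasDirDeriv g p w b) :
    HasDirDeriv (fun x => f x + g x) p w (a + b) :=
  (Filter.Tendsto.add hf hg).congr fun α => by ring

theorem HasDirDeriv.sub {f g : V → ℝ} {p w : V} {a b : ℝ}
    (hf : HasDirDeriv f p w a) (hg : HasDirDeriv g p w b) :
    HasDirDeriv (fun x => f x - g x) p w (a - b) :=
  (Filter.Tendsto.sub hf hg).congr fun α => by ring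

theorem HasDirDeriv.div_const {f : V → ℝ} {p w : V} {a : ℝ}
    (hf : HasDirDeriv f p w a) (r : ℝ) :
    HasDirDeriv (fun x => f x / r) p w (a / r) :=
  (Filter.Tendsto.div_const hf r).congr fun α => by ring

theorem ConvexAtPt.hasDirDeriv_le_sub {E : Set V} {f : V → ℝ} {pbar p : V} {d : ℝ}
    (hf : ConvexAtPt E f pbar) (hp : p ∈ E) (hd : HasDirDeriv f pbar (p - pbar) d) :
    d ≤ f p - f pbar := by
  refine le_of_tendsto hd ?_
  filter_upwards [Ioc_mem_nhdsGT (zero_lt_one' ℝ)] with α ⟨hα0, hα1⟩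
  have hconv := hf p hp α hα0.le hα1
  rw [show (1 - α) • pbar + α • p = pbar + α • (p - pbar) by module] at hconv
  rw [div_le_iff₀ hα0]
  linarith

theorem sum_mul_dirDeriv_nonpos_of_convexAtPt {ι : Type*} [Fintype ι] {E : Set V}
    {ψ : ι → V → ℝ} {d μ : ι → ℝ} {pbar p : V}
    (hψc : ∀ u, ConvexAtPt E (ψ u) pbar) (hψd : ∀ u, HasDirDeriv (ψ u) pbar (p - pbar) (d u))
    (hμ : ∀ u, 0 ≤ μ u) (hcs : ∀ u, μ u * ψ u pbar = 0) (hp : p ∈ E) (hpF : ∀ u, ψ u p ≤ 0) :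
    ∑ u, μ u * d u ≤ 0 := by
  refine Finset.sum_nonpos fun u _ => ?_
  calc μ u * d u ≤ μ u * (ψ u p - ψ u pbar) :=
        mul_le_mul_of_nonneg_left ((hψc u).hasDirDeriv_le_sub hp (hψd u)) (hμ u)
    _ = μ u * ψ u p := by rw [mul_sub, hcs u, sub_zero]
    _ ≤ 0 := mul_nonpos_of_nonneg_of_nonpos (hμ u) (hpF u)

end DirDeriv

theorem CWlt.center_lt_or_width_lt {aL aU bL bU : ℝ} (h : CWlt aL aU bL bU) :
    (aL + aU) / 2 < (bL + bU) / 2 ∨ (aU - aL) / 2 < (bU - bL) / 2 := by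
  obtain ⟨⟨hC, hW⟩, hne⟩ := h
  by_contra! hge
  rcases hne with hne | hne <;> apply hne <;> linarith [hge.1, hge.2]

theorem CWlt.weighted_lt {aL aU bL bU lamC lamW : ℝ} (h : CWlt aL aU bL bU)
    (hlamC : 0 < lamC) (hlamW : 0 < lamW) :
    lamC * ((aL + aU) / 2) + lamW * ((aU - aL) / 2)
      < lamC * ((bL + bU) / 2) + lamW * ((bU - bL) / 2) := by
  have hC := mul_le_mul_of_nonneg_left h.1.1 hlamC.le
  have hW := mul_le_mul_of_nonneg_left h.1.2 hlamW.le
  rcases h.center_lt_or_width_lt with hlt | hlt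
  · linarith [mul_lt_mul_of_pos_left hlt hlamC]
  · linarith [mul_lt_mul_of_pos_left hlt hlamW]

theorem kkt_weak_type_II_CW_convex_general
    {V : Type*} [NormedAddCommGroup V] [NormedSpace ℝ V]
    (E : Set V)
    (l t : ℕ) (φL φU : Fin l → V → ℝ) (ψ : Fin t → V → ℝ)
    (pbar : V)
    (ψ' : Fin t → V → ℝ)
    (hψd : ∀ u w, HasDirDeriv (ψ u) pbar w (ψ' u w))
    (hψc : ∀ u, ConvexAtPt E (ψ u) pbar)
    (c : Fin l)
    (φcL' φcU' : V → ℝ)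
    (hφLd : ∀ w, HasDirDeriv (φL c) pbar w (φcL' w))
    (hφUd : ∀ w, HasDirDeriv (φU c) pbar w (φcU' w))
    -- CW-convexity of `φ_c` at `pbar`
    (hφCc : ConvexAtPt E (fun x => (φL c x + φU c x) / 2) pbar)
    (hφWc : ConvexAtPt E (fun x => (φU c x - φL c x) / 2) pbar)
    (lamC lamW : ℝ) (μ : Fin t → ℝ)
    (hlamC : 0 < lamC) (hlamW : 0 < lamW) (hμ : ∀ u, 0 ≤ μ u)
    (hkkt : ∀ p ∈ E,
      0 ≤ lamC * ((φcL' (p - pbar) + φcU' (p - pbar)) / 2)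
          + lamW * ((φcU' (p - pbar) - φcL' (p - pbar)) / 2)
          + ∑ u, μ u * ψ' u (p - pbar))
    (hcs : ∀ u, μ u * ψ u pbar = 0) :
    ¬ ∃ phat, (phat ∈ E ∧ ∀ u, ψ u phat ≤ 0) ∧
      (∀ s, CWlt (φL s phat) (φU s phat) (φL s pbar) (φU s pbar)) := by
  rintro ⟨phat, ⟨hpE, hpF⟩, hlt⟩
  have hcenter := hφCc.hasDirDeriv_le_sub hpE (((hφLd _).add (hφUd _)).div_const 2)
  have hwidth := hφWc.hasDirDeriv_le_sub hpE (((hφUd _).sub (hφLd _)).div_const 2)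
  have hconstr := sum_mul_dirDeriv_nonpos_of_convexAtPt hψc (fun u => hψd u _) hμ hcs hpE hpF
  have hdominated := (hlt c).weighted_lt hlamC hlamW
  linarith [hkkt phat hpE, mul_le_mul_of_nonneg_left hcenter hlamC.le,
    mul_le_mul_of_nonneg_left hwidth hlamW.le]

/-- Theorem 3.5(b), Euclidean case: KKT sufficiency, via a single
CW-convex objective `φ_c`, for weakly type-II Pareto optimal solutions. -/
theorem kkt_weak_type_II_CW_convex
    {V : Type*} [NormedAddCommGroup V] [NormedSpace ℝ V]
    (E : Set V) (hEne : E.Nonempty) (hEopen : IsOpen E) (hEconv : Convex ℝ E)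
    (l t : ℕ) (φL φU : Fin l → V → ℝ) (ψ : Fin t → V → ℝ)
    (hφint : ∀ s, ∀ x ∈ E, φL s x ≤ φU s x)
    (pbar : V) (hpbarE : pbar ∈ E) (hpbarF : ∀ u, ψ u pbar ≤ 0)
    (ψ' : Fin t → V → ℝ)
    (hψd : ∀ u w, HasDirDeriv (ψ u) pbar w (ψ' u w))
    (hψc : ∀ u, ConvexAtPt E (ψ u) pbar)
    (c : Fin l)
    (φcL' φcU' : V → ℝ)
    (hφLd : ∀ w, HasDirDeriv (φL c) pbar w (φcL' w))
    (hφUd : ∀ w, HasDirDeriv (φU c) pbar w (φcU' w))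
    -- CW-convexity of `φ_c` at `pbar`
    (hφCc : ConvexAtPt E (fun x => (φL c x + φU c x) / 2) pbar)
    (hφWc : ConvexAtPt E (fun x => (φU c x - φL c x) / 2) pbar)
    (lamC lamW : ℝ) (μ : Fin t → ℝ)
    (hlamC : 0 < lamC) (hlamW : 0 < lamW) (hμ : ∀ u, 0 ≤ μ u)
    (hkkt : ∀ p ∈ E,
      0 ≤ lamC * ((φcL' (p - pbar) + φcU' (p - pbar)) / 2)
          + lamW * ((φcU' (p - pbar) - φcL' (p - pbar)) / 2)
          + ∑ u, μ u * ψ' u (p - pbar))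
    (hcs : ∀ u, μ u * ψ u pbar = 0) :
    ¬ ∃ phat, (phat ∈ E ∧ ∀ u, ψ u phat ≤ 0) ∧
      (∀ s, CWlt (φL s phat) (φU s phat) (φL s pbar) (φU s pbar)) :=
  kkt_weak_type_II_CW_convex_general E l t φL φU ψ pbar ψ' hψd hψc c φcL' φcU' hφLd hφUd hφCc hφWc
    lamC lamW μ hlamC hlamW hμ hkkt hcs
end

section
/- (Theorem 3.8(a), Euclidean case.) Let p̄ ∈ F, let each ψ_u (u = 1,…,t) be directionally differentiable at p̄, and assume ψ_u is strictly pseudo-convex at p̄ for every active index u ∈ J(p̄). Suppose there exists an index c ∈ {1,…,l} such that the interval-valued objective φ_c, defined on the nonempty open convex set E, is weakly directionally differentiable at p̄ and satisfies (φ_c^L)'(p̄; p − p̄) < (φ_c^U)'(p̄; p − p̄) for every p ∈ F with p ≠ p̄. If φ_c is U-convex at p̄ and for every p ∈ F there exist scalars μ_u ≥ 0 (possibly depending on p) such that (φ_c^L)'(p̄; p − p̄) + Σ_{u=1}^t μ_u ψ_u'(p̄; p − p̄) ≥ 0 and μ_u ψ_u(p̄) = 0 for all u, then p̄ is a strongly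 type-I Pareto optimal solution of (MIVOP2). -/
/-! If a feasible `p ≠ p̄` dominated `p̄`, convexity of `φ_c^U` at `p̄` would give
`(φ_c^U)'(p̄; p - p̄) ≤ φ_c^U(p) - φ_c^U(p̄) ≤ 0`, hence `(φ_c^L)'(p̄; p - p̄) < 0`. The KKT
inequality then needs some `μ_u > 0` with `ψ_u'(p̄; p - p̄) > 0`; complementary slackness makes
`u` active, and strict pseudo-convexity of `ψ_u` (as `ψ_u(p) ≤ 0 = ψ_u(p̄)`) makes that
derivative negative. -/

theorem HasDirDeriv.le_sub_of_convexAtPt {V : Type*} [NormedAddCommGroup V] [NormedSpace ℝ V]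
    {E : Set V} {f : V → ℝ} {p q : V} {d : ℝ}
    (hd : HasDirDeriv f p (q - p) d) (hconv : ConvexAtPt E f p) (hq : q ∈ E) :
    d ≤ f q - f p := by
  refine le_of_tendsto hd ?_
  filter_upwards [Ioo_mem_nhdsGT (zero_lt_one' ℝ)] with α ⟨hα0, hα1⟩
  have hseg : (1 - α) • p + α • q = p + α • (q - p) := by
    rw [sub_smul, one_smul, smul_sub]; abel
  have hchord := hconv q hq α hα0.le hα1.le
  rw [hseg] at hchord
  rw [div_le_iff₀ hα0]
  linarith

theorem exists_eq_zero_and_pos_of_sum_mul_pos {ι : Type*} [Fintype ι] {μ a g : ι → ℝ}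
    (hμ : ∀ i, 0 ≤ μ i) (hslack : ∀ i, μ i * a i = 0) (hsum : 0 < ∑ i, μ i * g i) :
    ∃ i, a i = 0 ∧ 0 < g i := by
  obtain ⟨i, -, hi⟩ := Finset.exists_lt_of_sum_lt (s := Finset.univ) (f := fun _ => (0 : ℝ))
    (g := fun i => μ i * g i) (by rwa [Finset.sum_const_zero])
  have hμi : 0 < μ i := (hμ i).lt_of_ne fun h => by simp [← h] at hi
  exact ⟨i, (mul_eq_zero.mp (hslack i)).resolve_left hμi.ne', pos_of_mul_pos_right hi (hμ i)⟩

theorem kkt_strong_type_I_U_convex_general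
    {V : Type*} [NormedAddCommGroup V] [NormedSpace ℝ V]
    (E : Set V)
    (l t : ℕ) (φL φU : Fin l → V → ℝ) (ψ : Fin t → V → ℝ)
    (pbar : V)
    (ψ' : Fin t → V → ℝ)
    -- strict pseudo-convexity of the active constraints at `pbar`
    (hψspc : ∀ u, ψ u pbar = 0 → StrictPseudoConvexAt E (ψ u) (ψ' u) pbar)
    (c : Fin l)
    (φcL' φcU' : V → ℝ)
    (hφUd : ∀ w, HasDirDeriv (φU c) pbar w (φcU' w))
    (hlt : ∀ p, p ∈ E → (∀ u, ψ u p ≤ 0) → p ≠ pbar →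
      φcL' (p - pbar) < φcU' (p - pbar))
    -- U-convexity of `φ_c` at `pbar`
    (hφUc : ConvexAtPt E (φU c) pbar)
    -- multipliers, possibly depending on the feasible point `p`
    (hkkt : ∀ p, p ∈ E → (∀ u, ψ u p ≤ 0) →
      ∃ μ : Fin t → ℝ, (∀ u, 0 ≤ μ u) ∧
        0 ≤ φcL' (p - pbar) + ∑ u, μ u * ψ' u (p - pbar) ∧
        ∀ u, μ u * ψ u pbar = 0) :
    ¬ ∃ phat, (phat ∈ E ∧ ∀ u, ψ u phat ≤ 0) ∧ phat ≠ pbar ∧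
      (∀ s, LUle (φL s phat) (φU s phat) (φL s pbar) (φU s pbar)) := by
  rintro ⟨p, ⟨hpE, hpF⟩, hpne, hdom⟩
  have hderivU : φcU' (p - pbar) ≤ 0 :=
    ((hφUd _).le_sub_of_convexAtPt hφUc hpE).trans (sub_nonpos.mpr (hdom c).2)
  have hderivL : φcL' (p - pbar) < 0 := (hlt p hpE hpF hpne).trans_le hderivU
  obtain ⟨μ, hμ, hstat, hslack⟩ := hkkt p hpE hpF
  obtain ⟨u, hactive, hpos⟩ :=
    exists_eq_zero_and_pos_of_sum_mul_pos hμ hslack (by linarith : 0 < ∑ u, μ u * ψ' u (p - pbar))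
  exact (hpos.trans (hψspc u hactive p hpE hpne ((hpF u).trans_eq hactive.symm))).false

/-- Theorem 3.8(a), Euclidean case: KKT sufficiency, via a single
U-convex objective `φ_c` whose lower directional derivative is strictly below
the upper one, for strongly type-I Pareto optimal solutions. -/
theorem kkt_strong_type_I_U_convex
    {V : Type*} [NormedAddCommGroup V] [NormedSpace ℝ V]
    (E : Set V) (hEne : E.Nonempty) (hEopen : IsOpen E) (hEconv : Convex ℝ E)
    (l t : ℕ) (φL φU : Fin l → V → ℝ) (ψ : Fin t → V → ℝ)
    (hφint : ∀ s, ∀ x ∈ E, φL s x ≤ φU s x)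
    (pbar : V) (hpbarE : pbar ∈ E) (hpbarF : ∀ u, ψ u pbar ≤ 0)
    (ψ' : Fin t → V → ℝ)
    (hψd : ∀ u w, HasDirDeriv (ψ u) pbar w (ψ' u w))
    -- strict pseudo-convexity of the active constraints at `pbar`
    (hψspc : ∀ u, ψ u pbar = 0 → StrictPseudoConvexAt E (ψ u) (ψ' u) pbar)
    (c : Fin l)
    (φcL' φcU' : V → ℝ)
    (hφLd : ∀ w, HasDirDeriv (φL c) pbar w (φcL' w))
    (hφUd : ∀ w, HasDirDeriv (φU c) pbar w (φcU' w))
    (hlt : ∀ p, p ∈ E → (∀ u, ψ u p ≤ 0) → p ≠ pbar →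
      φcL' (p - pbar) < φcU' (p - pbar))
    -- U-convexity of `φ_c` at `pbar`
    (hφUc : ConvexAtPt E (φU c) pbar)
    -- multipliers, possibly depending on the feasible point `p`
    (hkkt : ∀ p, p ∈ E → (∀ u, ψ u p ≤ 0) →
      ∃ μ : Fin t → ℝ, (∀ u, 0 ≤ μ u) ∧
        0 ≤ φcL' (p - pbar) + ∑ u, μ u * ψ' u (p - pbar) ∧
        ∀ u, μ u * ψ u pbar = 0) :
    ¬ ∃ phat, (phat ∈ E ∧ ∀ u, ψ u phat ≤ 0) ∧ phat ≠ pbar ∧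
      (∀ s, LUle (φL s phat) (φU s phat) (φL s pbar) (φU s pbar)) :=
  kkt_strong_type_I_U_convex_general E l t φL φU ψ pbar ψ' hψspc c φcL' φcU' hφUd hlt hφUc hkkt
end
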